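/- arXiv:1901.02331 — 5 statements merged into one kernel-verified Lean document; each statement's English description precedes it below -/
import Mathlib

section
/- For β of modulus 1 and λ in the punctured unit disk 𝔻 \ {0}, the anti-linear map J_{β,λ} on H² defined by (J_{β,λ}f)(z) = β·√(1−|λ|²)/(1−z·conj(λ)) · conj(f( (λ/conj(λ)) · (conj(λ)−conj(z))/(1−λ·conj(z)) )) is a conjugation on H²: anti-linear, isometric and involutive. -/
/-!
`J` is a weighted conjugate composition operator `f ↦ w · conj (f ∘ φ)` on the disk, where
`φ` is an anti-holomorphic involution of `𝔻` and `w = β · k_λ / ‖k_λ‖` is a unimodular multiple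
of the normalized reproducing kernel at `λ`. Since an element of `H²` is determined by its values
on `𝔻`, additivity, conjugate homogeneity and `J ∘ J = id` reduce to the pointwise identities
`φ ∘ φ = id` and `w · conj (w ∘ φ) = 1`. The graph of `J` is cut out by continuous point
evaluations, so `J` is continuous by the closed graph theorem. Then `(f, g) ↦ ⟪J f, g⟫` is a
continuous bilinear form, and it is symmetric because it is so on reproducing kernels (an
explicit rational identity), whose span is dense. Hence `‖J f‖² = ⟪J f, J f⟫ = ⟪J (J f), f⟫ = ‖f‖²`.
-/

open Complex ComplexConjugate Metric Filter

noncomputable section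

/-- The Hardy space `H²`, modeled as the space of square-summable Taylor coefficient
sequences, i.e. `ℓ²(ℕ, ℂ)`, with inner product `⟨f,g⟩ = Σₙ aₙ conj(bₙ)`. -/
abbrev H2 := lp (fun _ : ℕ => ℂ) 2

/-- The holomorphic function on the unit disk associated to an element of `H²`. -/
def H2.toFun (f : H2) (z : ℂ) : ℂ := ∑' n, f n * z ^ n

/-- The open unit disk. -/
def 𝔻 : Set ℂ := Metric.ball (0 : ℂ) 1

theorem mem_𝔻_iff {z : ℂ} : z ∈ 𝔻 ↔ ‖z‖ < 1 := mem_ball_zero_iff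

open scoped InnerProductSpace

section InnerProductSpace

variable {𝕜 E : Type*} [RCLike 𝕜] [NormedAddCommGroup E] [InnerProductSpace 𝕜 E]

theorem ContinuousLinearMap.inner_map_comm_of_dense_span (J : E →L⋆[𝕜] E) {s : Set E}
    (hs : Dense (Submodule.span 𝕜 s : Set E)) (h : ∀ x ∈ s, ∀ y ∈ s, ⟪J x, y⟫_𝕜 = ⟪J y, x⟫_𝕜)
    (x y : E) : ⟪J x, y⟫_𝕜 = ⟪J y, x⟫_𝕜 := by
  let B : E →L[𝕜] E →L[𝕜] 𝕜 := (innerSL 𝕜).comp J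
  have hB : B = B.flip :=
    ContinuousLinearMap.ext_on hs fun x hx =>
      ContinuousLinearMap.ext_on hs fun y hy => h x hx y hy
  exact congr($hB x y)

theorem norm_map_of_inner_map_comm_of_involutive {J : E → E}
    (hcomm : ∀ x y, ⟪J x, y⟫_𝕜 = ⟪J y, x⟫_𝕜) (hJ : Function.Involutive J) (x : E) :
    ‖J x‖ = ‖x‖ := by
  have h : ‖J x‖ ^ 2 = ‖x‖ ^ 2 := by
    rw [← inner_self_eq_norm_sq (𝕜 := 𝕜), ← inner_self_eq_norm_sq (𝕜 := 𝕜), hcomm, hJ x]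
  exact (pow_left_inj₀ (norm_nonneg _) (norm_nonneg _) two_ne_zero).mp h

end InnerProductSpace

theorem memℓp_two_pow {𝕜 : Type*} [NormedField 𝕜] {a : 𝕜} (ha : ‖a‖ < 1) :
    Memℓp (fun n : ℕ => a ^ n) 2 := by
  refine memℓp_gen
    ((summable_geometric_of_lt_one (r := ‖a‖ ^ 2) (by positivity) ?_).congr fun n => ?_)
  · nlinarith [norm_nonneg a]
  · norm_num [norm_pow, ← pow_mul, mul_comm]

namespace H2

def kernel (w : 𝔻) : H2 :=
  ⟨fun n => conj (w : ℂ) ^ n, memℓp_two_pow (by simpa using mem_𝔻_iff.1 w.2)⟩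

theorem inner_kernel (w : 𝔻) (f : H2) : ⟪kernel w, f⟫_ℂ = toFun f w := by
  rw [lp.inner_eq_tsum]
  refine tsum_congr fun n => ?_
  simp [kernel, mul_comm]

theorem toFun_add (f g : H2) {z : ℂ} (hz : z ∈ 𝔻) :
    toFun (f + g) z = toFun f z + toFun g z := by
  simp only [← inner_kernel ⟨z, hz⟩, inner_add_right]

theorem toFun_smul (c : ℂ) (f : H2) {z : ℂ} (hz : z ∈ 𝔻) :
    toFun (c • f) z = c * toFun f z := by
  simp only [← inner_kernel ⟨z, hz⟩, inner_smul_right]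

theorem continuous_toFun_apply {z : ℂ} (hz : z ∈ 𝔻) : Continuous fun f : H2 => toFun f z := by
  simp only [← inner_kernel ⟨z, hz⟩]
  fun_prop

theorem toFun_kernel (w : 𝔻) {z : ℂ} (hz : z ∈ 𝔻) :
    toFun (kernel w) z = (1 - z * conj (w : ℂ))⁻¹ := by
  have h : ‖conj (w : ℂ) * z‖ < 1 := by
    rw [norm_mul, RCLike.norm_conj]
    nlinarith [mem_𝔻_iff.1 w.2, mem_𝔻_iff.1 hz, norm_nonneg (w : ℂ), norm_nonneg z]
  rw [toFun, mul_comm z, ← tsum_geometric_of_norm_lt_one h]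
  exact tsum_congr fun n => (mul_pow _ _ _).symm

open FormalMultilinearSeries in
theorem hasFPowerSeriesOnBall_toFun (f : H2) :
    HasFPowerSeriesOnBall (toFun f) (ofScalars ℂ ⇑f) 0 1 := by
  have hr : 1 ≤ (ofScalars ℂ ⇑f).radius := by
    refine ENNReal.le_of_forall_nnreal_lt fun r hr =>
      (ofScalars ℂ ⇑f).le_radius_of_bound ‖f‖ fun n => ?_
    rw [ofScalars_norm]
    have hr1 : (r : ℝ) ≤ 1 := by exact_mod_cast hr.le
    calc ‖f n‖ * (r : ℝ) ^ n ≤ ‖f‖ * 1 :=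
          mul_le_mul (lp.norm_apply_le_norm two_ne_zero f n) (pow_le_one₀ r.2 hr1)
            (by positivity) (norm_nonneg f)
      _ = ‖f‖ := mul_one _
  have hsum : (ofScalars ℂ ⇑f).sum = toFun f := funext fun z => by
    rw [← ofScalarsSum, ofScalars_sum_eq]
    rfl
  rw [← hsum]
  exact ((ofScalars ℂ ⇑f).hasFPowerSeriesOnBall (zero_lt_one.trans_le hr)).mono zero_lt_one hr

theorem ext_toFun {f g : H2} (h : Set.EqOn (toFun f) (toFun g) 𝔻) : f = g := by
  have hf := (hasFPowerSeriesOnBall_toFun f).hasFPowerSeriesAt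
  have hg := ((hasFPowerSeriesOnBall_toFun g).hasFPowerSeriesAt).congr
    (Filter.eventuallyEq_of_mem (ball_mem_nhds 0 one_pos) h.symm)
  exact lp.ext <| FormalMultilinearSeries.ofScalars_series_injective ℂ ℂ <|
    hf.eq_formalMultilinearSeries hg

theorem dense_span_range_kernel : Dense (Submodule.span ℂ (Set.range kernel) : Set H2) := by
  rw [Submodule.dense_iff_topologicalClosure_eq_top, Submodule.topologicalClosure_eq_top_iff,
    Submodule.eq_bot_iff]
  intro f hf
  rw [Submodule.mem_orthogonal] at hf
  refine ext_toFun fun z hz => ?_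
  rw [← inner_kernel ⟨z, hz⟩, hf _ (Submodule.subset_span ⟨_, rfl⟩)]
  simp [toFun]

def IsWeightedConjComp (w φ : ℂ → ℂ) (J : H2 → H2) : Prop :=
  ∀ f : H2, ∀ z ∈ 𝔻, toFun (J f) z = w z * conj (toFun f (φ z))

namespace IsWeightedConjComp

variable {w φ : ℂ → ℂ} {J : H2 → H2}

theorem map_add (hJ : IsWeightedConjComp w φ J) (hφ : Set.MapsTo φ 𝔻 𝔻) (f g : H2) :
    J (f + g) = J f + J g :=
  ext_toFun fun z hz => by
    rw [toFun_add _ _ hz, hJ _ z hz, hJ _ z hz, hJ _ z hz, toFun_add _ _ (hφ hz),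
      _root_.map_add, mul_add]

theorem map_smul (hJ : IsWeightedConjComp w φ J) (hφ : Set.MapsTo φ 𝔻 𝔻) (c : ℂ) (f : H2) :
    J (c • f) = conj c • J f :=
  ext_toFun fun z hz => by
    rw [toFun_smul _ _ hz, hJ _ z hz, hJ _ z hz, toFun_smul _ _ (hφ hz), map_mul, mul_left_comm]

theorem continuous (hJ : IsWeightedConjComp w φ J) (hφ : Set.MapsTo φ 𝔻 𝔻) : Continuous J := by
  let Jℝ : H2 →ₗ[ℝ] H2 :=
    { toFun := J
      map_add' := hJ.map_add hφ
      map_smul' := fun r f => by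
        simp only [RingHom.id_apply, RCLike.real_smul_eq_coe_smul (K := ℂ), hJ.map_smul hφ,
          RCLike.conj_ofReal] }
  refine Jℝ.continuous_of_isClosed_graph ?_
  have hgraph : (Jℝ.graph : Set (H2 × H2)) =
      ⋂ z ∈ 𝔻, {p | toFun p.2 z = w z * conj (toFun p.1 (φ z))} := by
    ext p
    simp only [SetLike.mem_coe, LinearMap.mem_graph_iff, Set.mem_iInter, Set.mem_ofPred_eq]
    refine ⟨fun h z hz => h ▸ hJ p.1 z hz, fun h => ext_toFun fun z hz => ?_⟩
    exact (h z hz).trans (hJ p.1 z hz).symm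
  rw [hgraph]
  exact isClosed_biInter fun z hz => isClosed_eq
    ((continuous_toFun_apply hz).comp continuous_snd)
    (continuous_const.mul <| continuous_conj.comp <|
      (continuous_toFun_apply (hφ hz)).comp continuous_fst)

def toContinuousLinearMap (hJ : IsWeightedConjComp w φ J) (hφ : Set.MapsTo φ 𝔻 𝔻) :
    H2 →L⋆[ℂ] H2 where
  toFun := J
  map_add' := hJ.map_add hφ
  map_smul' := hJ.map_smul hφ
  cont := hJ.continuous hφ

theorem involutive (hJ : IsWeightedConjComp w φ J) (hφ : Set.MapsTo φ 𝔻 𝔻)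
    (hφφ : ∀ z ∈ 𝔻, φ (φ z) = z) (hw : ∀ z ∈ 𝔻, w z * conj (w (φ z)) = 1) :
    Function.Involutive J :=
  fun f => ext_toFun fun z hz => by
    rw [hJ _ z hz, hJ _ _ (hφ hz), hφφ z hz, map_mul, conj_conj, ← mul_assoc, hw z hz, one_mul]

/-- `hsymm` says `(J k_u) v = (J k_v) u` for the reproducing kernels `k_u z = (1 - z * conj u)⁻¹`.
-/
theorem inner_map_comm (hJ : IsWeightedConjComp w φ J) (hφ : Set.MapsTo φ 𝔻 𝔻)
    (hsymm : ∀ v ∈ 𝔻, ∀ u ∈ 𝔻,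
      w v * conj (1 - φ v * conj u)⁻¹ = w u * conj (1 - φ u * conj v)⁻¹)
    (f g : H2) : ⟪J f, g⟫_ℂ = ⟪J g, f⟫_ℂ := by
  refine (hJ.toContinuousLinearMap hφ).inner_map_comm_of_dense_span dense_span_range_kernel
    ?_ f g
  rintro _ ⟨u, rfl⟩ _ ⟨v, rfl⟩
  change ⟪J (kernel u), kernel v⟫_ℂ = ⟪J (kernel v), kernel u⟫_ℂ
  rw [← inner_conj_symm, inner_kernel, ← inner_conj_symm (J (kernel v)), inner_kernel,
    hJ _ _ v.2, hJ _ _ u.2, toFun_kernel _ (hφ v.2), toFun_kernel _ (hφ u.2), hsymm v v.2 u u.2]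

theorem norm_map (hJ : IsWeightedConjComp w φ J) (hφ : Set.MapsTo φ 𝔻 𝔻)
    (hsymm : ∀ v ∈ 𝔻, ∀ u ∈ 𝔻,
      w v * conj (1 - φ v * conj u)⁻¹ = w u * conj (1 - φ u * conj v)⁻¹)
    (hinv : Function.Involutive J) (f : H2) : ‖J f‖ = ‖f‖ :=
  norm_map_of_inner_map_comm_of_involutive (hJ.inner_map_comm hφ hsymm) hinv f

end IsWeightedConjComp

end H2

namespace Complex

theorem normSq_one_sub_mul_conj_sub_normSq_sub (a b : ℂ) :
    normSq (1 - a * conj b) - normSq (a - b) = (1 - normSq a) * (1 - normSq b) := by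
  simp only [normSq_apply, sub_re, sub_im, mul_re, mul_im, conj_re, conj_im, one_re, one_im]
  ring

theorem norm_sub_lt_norm_one_sub_mul_conj {a b : ℂ} (ha : ‖a‖ < 1) (hb : ‖b‖ < 1) :
    ‖a - b‖ < ‖1 - a * conj b‖ := by
  have key := normSq_one_sub_mul_conj_sub_normSq_sub a b
  simp only [normSq_eq_norm_sq] at key
  have hpos : 0 < (1 - ‖a‖ ^ 2) * (1 - ‖b‖ ^ 2) := by
    apply mul_pos <;> nlinarith [norm_nonneg a, norm_nonneg b]
  exact lt_of_pow_lt_pow_left₀ 2 (norm_nonneg _) (by linarith)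

theorem one_sub_mul_conj_ne_zero {a b : ℂ} (ha : ‖a‖ < 1) (hb : ‖b‖ < 1) :
    1 - a * conj b ≠ 0 :=
  norm_pos_iff.mp ((norm_nonneg _).trans_lt (norm_sub_lt_norm_one_sub_mul_conj ha hb))

end Complex

def antiMobius (l z : ℂ) : ℂ := (l / conj l) * ((conj l - conj z) / (1 - l * conj z))

def normalizedKernel (l z : ℂ) : ℂ := (Real.sqrt (1 - ‖l‖ ^ 2) : ℂ) / (1 - z * conj l)

section antiMobius

variable {l z : ℂ}

theorem norm_antiMobius (hl0 : l ≠ 0) : ‖antiMobius l z‖ = ‖l - z‖ / ‖1 - l * conj z‖ := by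
  rw [antiMobius, norm_mul, norm_div, norm_div, RCLike.norm_conj,
    div_self (norm_ne_zero_iff.2 hl0), one_mul, ← map_sub, RCLike.norm_conj]

theorem mapsTo_antiMobius (hl : l ∈ 𝔻) (hl0 : l ≠ 0) : Set.MapsTo (antiMobius l) 𝔻 𝔻 := by
  intro z hz
  rw [mem_𝔻_iff] at hl hz ⊢
  have h := norm_sub_lt_norm_one_sub_mul_conj hl hz
  rwa [norm_antiMobius hl0, div_lt_one ((norm_nonneg _).trans_lt h)]

theorem conj_antiMobius : conj (antiMobius l z) = conj l / l * ((l - z) / (1 - conj l * z)) := by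
  simp [antiMobius]

theorem antiMobius_antiMobius (hl : l ∈ 𝔻) (hl0 : l ≠ 0) (hz : z ∈ 𝔻) :
    antiMobius l (antiMobius l z) = z := by
  rw [mem_𝔻_iff] at hl hz
  have hcl : conj l ≠ 0 := by simpa using hl0
  have h₂ : 1 - conj l * z ≠ 0 := by
    simpa [mul_comm] using one_sub_mul_conj_ne_zero hz hl
  have hll : 1 - l * conj l ≠ 0 := one_sub_mul_conj_ne_zero hl hl
  rw [antiMobius, conj_antiMobius]
  field_simp
  rw [show 1 - conj l * z - conj l * (l - z) = 1 - l * conj l by ring, div_eq_iff hll]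
  ring

theorem one_sub_conj_antiMobius_mul (hl : l ∈ 𝔻) (hl0 : l ≠ 0) (hz : z ∈ 𝔻) :
    (1 - conj (antiMobius l z) * l) * (1 - z * conj l) = 1 - l * conj l := by
  rw [mem_𝔻_iff] at hl hz
  have h : 1 - conj l * z ≠ 0 := by simpa [mul_comm] using one_sub_mul_conj_ne_zero hz hl
  rw [conj_antiMobius]
  field_simp
  ring

theorem ofReal_sqrt_one_sub_norm_sq_sq (hl : l ∈ 𝔻) :
    (Real.sqrt (1 - ‖l‖ ^ 2) : ℂ) ^ 2 = 1 - l * conj l := by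
  rw [← ofReal_pow, Real.sq_sqrt (by nlinarith [mem_𝔻_iff.1 hl, norm_nonneg l]), mul_conj,
    normSq_eq_norm_sq]
  push_cast
  ring

theorem mul_normalizedKernel_mul_conj_antiMobius {β : ℂ} (hβ : ‖β‖ = 1) (hl : l ∈ 𝔻)
    (hl0 : l ≠ 0) (hz : z ∈ 𝔻) :
    β * normalizedKernel l z * conj (β * normalizedKernel l (antiMobius l z)) = 1 := by
  have hll : 1 - l * conj l ≠ 0 := one_sub_mul_conj_ne_zero (mem_𝔻_iff.1 hl) (mem_𝔻_iff.1 hl)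
  have hββ : β * conj β = 1 := by simp [mul_conj, normSq_eq_norm_sq, hβ]
  calc β * normalizedKernel l z * conj (β * normalizedKernel l (antiMobius l z))
      = β * conj β * ((Real.sqrt (1 - ‖l‖ ^ 2) : ℂ) ^ 2 *
          ((1 - conj (antiMobius l z) * l)⁻¹ * (1 - z * conj l)⁻¹)) := by
        simp only [normalizedKernel, map_mul, map_div₀, map_sub, map_one, conj_ofReal, conj_conj]
        ring
    _ = 1 := by
      rw [hββ, ← mul_inv, one_sub_conj_antiMobius_mul hl hl0 hz,
        ofReal_sqrt_one_sub_norm_sq_sq hl, one_mul, mul_inv_cancel₀ hll]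

theorem normalizedKernel_mul_conj_inv_one_sub_antiMobius_mul_conj {u v : ℂ} (hl : l ∈ 𝔻)
    (hl0 : l ≠ 0) (hv : v ∈ 𝔻) (hu : u ∈ 𝔻) :
    normalizedKernel l v * conj (1 - antiMobius l v * conj u)⁻¹ =
      Real.sqrt (1 - ‖l‖ ^ 2) * l / (l - l * conj l * (v + u) + conj l * v * u) := by
  have hlv : 1 - conj l * v ≠ 0 := by
    simpa [mul_comm] using one_sub_mul_conj_ne_zero (mem_𝔻_iff.1 hv) (mem_𝔻_iff.1 hl)
  have hφu : 1 - conj (antiMobius l v) * u ≠ 0 := by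
    simpa using one_sub_mul_conj_ne_zero (a := conj (antiMobius l v)) (b := conj u)
      (by simpa [mem_𝔻_iff] using mapsTo_antiMobius hl hl0 hv) (by simpa [mem_𝔻_iff] using hu)
  have hden : l - l * conj l * (v + u) + conj l * v * u
      = l * (1 - conj l * v) * (1 - conj (antiMobius l v) * u) := by
    rw [conj_antiMobius]
    field_simp
    ring
  rw [normalizedKernel, map_inv₀, map_sub, map_one, map_mul, conj_conj, hden]
  rw [show (1 : ℂ) - v * conj l = 1 - conj l * v by ring]
  field_simp

end antiMobius

/-- for unimodular `β` and `λ ∈ 𝔻 \ {0}`, the map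
`J_{β,λ}f(z) = β·√(1−|λ|²)/(1−z·conj λ) · conj(f((λ/conj λ)·(conj λ − conj z)/(1 − λ·conj z)))`
is a conjugation on `H²`: anti-linear, isometric and involutive. -/
theorem stmt1 (β l : ℂ) (hβ : ‖β‖ = 1) (hl : l ∈ 𝔻) (hl0 : l ≠ 0) (J : H2 → H2)
    (hJ : ∀ f : H2, ∀ z ∈ 𝔻, H2.toFun (J f) z =
      β * ((Real.sqrt (1 - ‖l‖ ^ 2) : ℂ) / (1 - z * conj l)) *
        conj (H2.toFun f ((l / conj l) * ((conj l - conj z) / (1 - l * conj z))))) :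
    (∀ f g : H2, J (f + g) = J f + J g) ∧
    (∀ (c : ℂ) (f : H2), J (c • f) = conj c • J f) ∧
    (∀ f : H2, ‖J f‖ = ‖f‖) ∧
    (∀ f : H2, J (J f) = f) := by
  have hφ := mapsTo_antiMobius hl hl0
  have hJ' : H2.IsWeightedConjComp (fun z => β * normalizedKernel l z) (antiMobius l) J := hJ
  have hinv : Function.Involutive J :=
    hJ'.involutive hφ (fun _ hz => antiMobius_antiMobius hl hl0 hz)
      (fun _ hz => mul_normalizedKernel_mul_conj_antiMobius hβ hl hl0 hz)
  have hsymm : ∀ v ∈ 𝔻, ∀ u ∈ 𝔻,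
      β * normalizedKernel l v * conj (1 - antiMobius l v * conj u)⁻¹ =
        β * normalizedKernel l u * conj (1 - antiMobius l u * conj v)⁻¹ := fun v hv u hu => by
    rw [mul_assoc, mul_assoc,
      normalizedKernel_mul_conj_inv_one_sub_antiMobius_mul_conj hl hl0 hv hu,
      normalizedKernel_mul_conj_inv_one_sub_antiMobius_mul_conj hl hl0 hu hv]
    ring
  exact ⟨hJ'.map_add hφ, hJ'.map_smul hφ, hJ'.norm_map hφ hsymm hinv, hinv⟩
end
end

section
/- Let ℰ be a densely defined first-order differential operator on H² with symbols ψ₀, ψ₁. Then for every w ∈ 𝔻 and m ∈ ℕ, K_w^{[m]} ∈ dom(ℰ*) and ℰ*K_w^{[m]} = conj(ψ₀^{(m)}(w))·K_w + Σ_{j=1}^{m} [ C(m,j)·conj(ψ₀^{(m−j)}(w)) + C(m,j−1)·conj(ψ₁^{(m−j+1)}(w)) ]·K_w^{[j]} + conj(ψ₁(w))·K_w^{[m+1]}. -/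
/-!
Identify `H²` with `ℓ²` and an element with its power series on `𝔻`. The power series of
`K_w^{[j]}` has coefficients `n(n-1)⋯(n-j+1)·conj(w)^{n-j}` (differentiate the geometric series),
so by termwise differentiation `⟪K_w^{[j]}, f⟫ = f^{(j)}(w)` for every `f ∈ H²`. For `x ∈ dom ℰ`,
Leibniz's rule expands `⟪K_w^{[m]}, ℰx⟫ = (ψ₀x + ψ₁x')^{(m)}(w)` into a combination of
`x^{(j)}(w) = ⟪K_w^{[j]}, x⟫`, `0 ≤ j ≤ m + 1`; hence `x ↦ ⟪K_w^{[m]}, ℰx⟫` is represented by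
the corresponding combination of kernels, which is `ℰ*K_w^{[m]}` since `dom ℰ` is dense.
-/

open Complex ComplexConjugate Metric Filter

noncomputable section

/-- `IsEof ψ₀ ψ₁ f g` : the function represented by `g` equals `ψ₀·f + ψ₁·f′` on `𝔻`,
i.e. `g = E(ψ₀,ψ₁) f`. -/
def IsEof (ψ₀ ψ₁ : ℂ → ℂ) (f g : H2) : Prop :=
  ∀ z ∈ 𝔻, H2.toFun g z = ψ₀ z * H2.toFun f z + ψ₁ z * deriv (H2.toFun f) z

theorem choose_mul_pow_mul_pow_le_add_pow {R : Type*} [CommSemiring R] [PartialOrder R]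
    [IsOrderedRing R] {x y : R} (hx : 0 ≤ x) (hy : 0 ≤ y) {n k : ℕ} (hk : k ≤ n) :
    x ^ k * y ^ (n - k) * n.choose k ≤ (x + y) ^ n := by
  rw [add_pow]
  exact Finset.single_le_sum (f := fun m => x ^ m * y ^ (n - m) * n.choose m)
    (fun m _ => by positivity) (Finset.mem_range_succ_iff.2 hk)

theorem sum_range_choose_mul_add_shift {R : Type*} [CommSemiring R] (A B F : ℕ → R) (m : ℕ) :
    ∑ i ∈ Finset.range (m + 1), (m.choose i : R) * (A (m - i) * F i + B (m - i) * F (i + 1)) =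
      A m * F 0 +
        ∑ j ∈ Finset.Icc 1 m, (m.choose j * A (m - j) + m.choose (j - 1) * B (m - j + 1)) * F j +
        B 0 * F (m + 1) := by
  have hIcc : ∀ f : ℕ → R, ∑ j ∈ Finset.Icc 1 m, f j = ∑ i ∈ Finset.range m, f (i + 1) :=
    fun f => by
      rw [← Finset.Ico_add_one_right_eq_Icc, Finset.sum_Ico_eq_sum_range, Nat.add_sub_cancel]
      simp only [add_comm 1]
  simp_rw [mul_add, Finset.sum_add_distrib, hIcc, add_mul, Finset.sum_add_distrib]
  rw [Finset.sum_range_succ', Finset.sum_range_succ]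
  have hB : ∀ i ∈ Finset.range m, (m.choose i : R) * (B (m - i) * F (i + 1)) =
      m.choose (i + 1 - 1) * B (m - (i + 1) + 1) * F (i + 1) := fun i hi => by
    rw [Nat.add_sub_cancel, show m - (i + 1) + 1 = m - i by have := Finset.mem_range.1 hi; omega]
    ring
  rw [Finset.sum_congr rfl hB]
  simp only [Nat.choose_zero_right, Nat.choose_self, Nat.sub_zero, Nat.sub_self, Nat.cast_one,
    one_mul]
  simp_rw [mul_assoc]
  ring

section PowerSeries

variable {𝕜 : Type*} [RCLike 𝕜]

-- The power series `∑ aₙ zⁿ` has radius of convergence at least `1`.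
def DiskSummable (a : ℕ → 𝕜) : Prop :=
  ∀ r : ℝ, 0 ≤ r → r < 1 → Summable fun n => ‖a n‖ * r ^ n

theorem DiskSummable.of_norm_le {a : ℕ → 𝕜} {C : ℝ} (h : ∀ n, ‖a n‖ ≤ C) : DiskSummable a :=
  fun r hr₀ hr₁ => .of_nonneg_of_le (fun n => by positivity)
    (fun n => mul_le_mul_of_nonneg_right (h n) (pow_nonneg hr₀ n))
    ((summable_geometric_of_lt_one hr₀ hr₁).mul_left C)

theorem DiskSummable.summable_descFactorial_mul {a : ℕ → 𝕜} (ha : DiskSummable a) (k : ℕ)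
    {r : ℝ} (hr₀ : 0 ≤ r) (hr₁ : r < 1) :
    Summable fun n => n.descFactorial k * ‖a n‖ * r ^ (n - k) := by
  obtain ⟨s, hrs, hs₁⟩ := exists_between hr₁
  have hs₀ : 0 ≤ s := hr₀.trans hrs.le
  have hsr : 0 < s - r := sub_pos.2 hrs
  refine Summable.of_nonneg_of_le (fun n => by positivity) (fun n => ?_)
    ((ha s hs₀ hs₁).mul_left (k.factorial / (s - r) ^ k))
  rcases lt_or_ge n k with hnk | hkn
  · simp only [Nat.descFactorial_eq_zero_iff_lt.2 hnk, Nat.cast_zero, zero_mul]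
    positivity
  -- Cauchy's estimate, coefficientwise: one term of the binomial expansion of `((s - r) + r) ^ n`.
  have hbinom := choose_mul_pow_mul_pow_le_add_pow hsr.le hr₀ hkn
  rw [sub_add_cancel] at hbinom
  rw [Nat.descFactorial_eq_factorial_mul_choose, Nat.cast_mul, div_mul_eq_mul_div,
    le_div_iff₀ (by positivity)]
  calc (k.factorial * n.choose k : ℝ) * ‖a n‖ * r ^ (n - k) * (s - r) ^ k
      = k.factorial * ‖a n‖ * ((s - r) ^ k * r ^ (n - k) * n.choose k) := by ring
    _ ≤ k.factorial * ‖a n‖ * s ^ n := by gcongr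
    _ = k.factorial * (‖a n‖ * s ^ n) := by ring

theorem DiskSummable.summable_mul_pow {a : ℕ → 𝕜} (ha : DiskSummable a) {y : 𝕜}
    (hy : ‖y‖ < 1) : Summable fun n => a n * y ^ n :=
  .of_norm_bounded (ha ‖y‖ (norm_nonneg y) hy) fun n => by rw [norm_mul, norm_pow]

theorem norm_mul_descFactorial_mul_pow_le {a : ℕ → 𝕜} {r : ℝ} {y : 𝕜} (hy : ‖y‖ ≤ r)
    (n j : ℕ) :
    ‖a n * (n.descFactorial j * y ^ (n - j))‖ ≤ n.descFactorial j * ‖a n‖ * r ^ (n - j) := by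
  rw [norm_mul, norm_mul, norm_pow, RCLike.norm_natCast]
  calc ‖a n‖ * (n.descFactorial j * ‖y‖ ^ (n - j))
      ≤ ‖a n‖ * (n.descFactorial j * r ^ (n - j)) := by gcongr
    _ = _ := by ring

theorem DiskSummable.summableLocallyUniformlyOn {a : ℕ → 𝕜} (ha : DiskSummable a) (j : ℕ) :
    SummableLocallyUniformlyOn (fun n y => a n * (n.descFactorial j * y ^ (n - j)))
      (ball (0 : 𝕜) 1) := by
  refine SummableLocallyUniformlyOn_of_locally_bounded isOpen_ball fun K hK hKc => ?_
  obtain ⟨r, ⟨hr₀, hr₁⟩, hKr⟩ := exists_pos_lt_subset_ball one_pos hKc.isClosed hK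
  refine ⟨_, ha.summable_descFactorial_mul j hr₀.le hr₁, fun n y hy => ?_⟩
  exact norm_mul_descFactorial_mul_pow_le (mem_ball_zero_iff.1 (hKr hy)).le n j

theorem iteratedDerivWithin_const_mul_pow {s : Set 𝕜} (hs : UniqueDiffOn 𝕜 s) {y : 𝕜}
    (hy : y ∈ s) (c : 𝕜) (n k : ℕ) :
    iteratedDerivWithin k (fun z => c * z ^ n) s y = c * (n.descFactorial k * y ^ (n - k)) := by
  rw [iteratedDerivWithin_const_mul_field, iteratedDerivWithin_pow (hx := hy) (h := hs)]

theorem DiskSummable.iteratedDeriv_tsum {a : ℕ → 𝕜} (ha : DiskSummable a) (k : ℕ) {z : 𝕜}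
    (hz : ‖z‖ < 1) :
    iteratedDeriv k (fun z => ∑' n, a n * z ^ n) z =
      ∑' n, a n * (n.descFactorial k * z ^ (n - k)) := by
  have hball : IsOpen (ball (0 : 𝕜) 1) := isOpen_ball
  have hz' : z ∈ ball (0 : 𝕜) 1 := mem_ball_zero_iff.2 hz
  have hterm : ∀ n j, Set.EqOn (iteratedDerivWithin j (fun z => a n * z ^ n) (ball 0 1))
      (fun y => a n * (n.descFactorial j * y ^ (n - j))) (ball 0 1) := fun n j y hy =>
    iteratedDerivWithin_const_mul_pow hball.uniqueDiffOn hy _ _ _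
  rw [← iteratedDerivWithin_of_isOpen hball hz', iteratedDerivWithin_tsum k hball hz']
  · exact tsum_congr fun n => hterm n k hz'
  · exact fun y hy => ha.summable_mul_pow (mem_ball_zero_iff.1 hy)
  · exact fun j _ _ => SummableLocallyUniformlyOn_congr (fun n y hy => (hterm n j hy).symm)
      (ha.summableLocallyUniformlyOn j)
  · intro n j y _ hy
    refine DifferentiableAt.congr_of_eventuallyEq
      (f := fun y => a n * (n.descFactorial j * y ^ (n - j))) (by fun_prop) ?_
    filter_upwards [hball.mem_nhds hy] with x hx using hterm n j hx

theorem DiskSummable.iteratedDeriv_tsum_zero {a : ℕ → 𝕜} (ha : DiskSummable a) (k : ℕ) :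
    iteratedDeriv k (fun z => ∑' n, a n * z ^ n) 0 = k.factorial * a k := by
  rw [ha.iteratedDeriv_tsum k (by simp), tsum_eq_single k fun n hn => ?_]
  · simp [Nat.descFactorial_self, mul_comm]
  rcases hn.lt_or_gt with hnk | hkn
  · simp [Nat.descFactorial_eq_zero_iff_lt.2 hnk]
  · simp [zero_pow (Nat.sub_ne_zero_of_lt hkn)]

theorem DiskSummable.eq_of_tsum_mul_pow_eq {a b : ℕ → 𝕜} (ha : DiskSummable a)
    (hb : DiskSummable b) (h : ∀ z : 𝕜, ‖z‖ < 1 → ∑' n, a n * z ^ n = ∑' n, b n * z ^ n) :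
    a = b := by
  funext k
  have hfun : (fun z : 𝕜 => ∑' n, a n * z ^ n) =ᶠ[nhds 0] fun z => ∑' n, b n * z ^ n := by
    filter_upwards [ball_mem_nhds (0 : 𝕜) one_pos] with z hz using h z (mem_ball_zero_iff.1 hz)
  have := hfun.iteratedDeriv_eq k
  rw [ha.iteratedDeriv_tsum_zero, hb.iteratedDeriv_tsum_zero] at this
  exact mul_left_cancel₀ (Nat.cast_ne_zero.2 k.factorial_ne_zero) this

theorem hasSum_descFactorial_mul_geometric (j : ℕ) {q u : 𝕜} (h : ‖q * u‖ < 1) :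
    HasSum (fun n => n.descFactorial j * q ^ (n - j) * u ^ n)
      (j.factorial * u ^ j / (1 - q * u) ^ (j + 1)) := by
  refine (hasSum_nat_add_iff' j).1 ?_
  rw [Finset.sum_eq_zero fun n hn => by
    simp [Nat.descFactorial_eq_zero_iff_lt.2 (Finset.mem_range.1 hn)], sub_zero]
  have hterm : ∀ n, ((n + j).descFactorial j : 𝕜) * q ^ (n + j - j) * u ^ (n + j) =
      j.factorial * u ^ j * ((n + j).choose j * (q * u) ^ n) := fun n => by
    rw [Nat.add_sub_cancel, Nat.descFactorial_eq_factorial_mul_choose]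
    push_cast
    ring
  simpa only [hterm, mul_one_div] using
    (hasSum_choose_mul_geometric_of_norm_lt_one j h).mul_left (j.factorial * u ^ j)

theorem diskSummable_descFactorial_mul_pow (j : ℕ) {q : 𝕜} (hq : ‖q‖ < 1) :
    DiskSummable fun n => (n.descFactorial j : 𝕜) * q ^ (n - j) := by
  intro r hr₀ hr₁
  have hqr : ‖‖q‖ * r‖ < 1 := by
    rw [norm_mul, norm_norm, Real.norm_of_nonneg hr₀]
    nlinarith [norm_nonneg q]
  refine (hasSum_descFactorial_mul_geometric j hqr).summable.congr fun n => ?_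
  rw [norm_mul, norm_pow, RCLike.norm_natCast]

end PowerSeries

theorem DiskSummable.differentiableOn {a : ℕ → ℂ} (ha : DiskSummable a) :
    DifferentiableOn ℂ (fun z => ∑' n, a n * z ^ n) (ball 0 1) := by
  intro z hz
  obtain ⟨r, hzr, hr₁⟩ := exists_between (mem_ball_zero_iff.1 hz)
  have hdiff : DifferentiableOn ℂ (fun z => ∑' n, a n * z ^ n) (ball 0 r) :=
    differentiableOn_tsum_of_summable_norm (ha r ((norm_nonneg z).trans hzr.le) hr₁)
      (fun n => by fun_prop) isOpen_ball fun n y hy => by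
        rw [norm_mul, norm_pow]
        gcongr
        exact (mem_ball_zero_iff.1 hy).le
  exact (hdiff.differentiableAt (isOpen_ball.mem_nhds (mem_ball_zero_iff.2 hzr)))
    |>.differentiableWithinAt

theorem iteratedDeriv_mul_add_mul_deriv {𝕜 : Type*} [NontriviallyNormedField 𝕜] [CompleteSpace 𝕜]
    {ψ₀ ψ₁ F : 𝕜 → 𝕜} {w : 𝕜} (h₀ : AnalyticAt 𝕜 ψ₀ w) (h₁ : AnalyticAt 𝕜 ψ₁ w)
    (hF : AnalyticAt 𝕜 F w) (m : ℕ) :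
    iteratedDeriv m (fun z => ψ₀ z * F z + ψ₁ z * deriv F z) w =
      ∑ i ∈ Finset.range (m + 1), (m.choose i : 𝕜) *
        (iteratedDeriv (m - i) ψ₀ w * iteratedDeriv i F w +
          iteratedDeriv (m - i) ψ₁ w * iteratedDeriv (i + 1) F w) := by
  have hfun : (fun z => ψ₀ z * F z + ψ₁ z * deriv F z) = F * ψ₀ + deriv F * ψ₁ := by
    funext z
    simp only [Pi.add_apply, Pi.mul_apply, mul_comm]
  rw [hfun, iteratedDeriv_add (hF.mul h₀).contDiffAt (hF.deriv.mul h₁).contDiffAt,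
    iteratedDeriv_mul hF.contDiffAt h₀.contDiffAt,
    iteratedDeriv_mul hF.deriv.contDiffAt h₁.contDiffAt, ← Finset.sum_add_distrib]
  refine Finset.sum_congr rfl fun i _ => ?_
  rw [← iteratedDeriv_succ']
  ring

theorem LinearPMap.exists_adjoint_apply_eq {𝕜 E F : Type*} [RCLike 𝕜] [NormedAddCommGroup E]
    [InnerProductSpace 𝕜 E] [NormedAddCommGroup F] [InnerProductSpace 𝕜 F] [CompleteSpace E]
    {T : E →ₗ.[𝕜] F} (hT : Dense (T.domain : Set E)) {y : F} {g : E}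
    (h : ∀ x : T.domain, inner 𝕜 g (x : E) = inner 𝕜 y (T x)) :
    ∃ hy : y ∈ T.adjoint.domain, T.adjoint ⟨y, hy⟩ = g :=
  ⟨T.mem_adjoint_domain_of_exists y ⟨g, h⟩, T.adjoint_apply_eq hT _ h⟩

theorem H2.diskSummable (f : H2) : DiskSummable ⇑f :=
  .of_norm_le fun n => lp.norm_apply_le_norm two_ne_zero f n

theorem H2.analyticAt_toFun (f : H2) {z : ℂ} (hz : z ∈ 𝔻) : AnalyticAt ℂ (H2.toFun f) z :=
  (H2.diskSummable f).differentiableOn.analyticAt (isOpen_ball.mem_nhds hz)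

theorem H2.coeFn_eq_of_toFun_eq {K : H2} {w : ℂ} (hw : w ∈ 𝔻) {j : ℕ}
    (hK : ∀ u ∈ 𝔻, H2.toFun K u = j.factorial * u ^ j / (1 - conj w * u) ^ (j + 1)) :
    ⇑K = fun n => (n.descFactorial j : ℂ) * conj w ^ (n - j) := by
  have hw₁ : ‖conj w‖ < 1 := by rwa [RCLike.norm_conj, ← mem_ball_zero_iff]
  refine (H2.diskSummable K).eq_of_tsum_mul_pow_eq (diskSummable_descFactorial_mul_pow j hw₁)
    fun u hu => ?_
  have hwu : ‖conj w * u‖ < 1 := by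
    rw [norm_mul]
    exact mul_lt_one_of_nonneg_of_lt_one_left (norm_nonneg _) hw₁ hu.le
  exact (hK u (mem_ball_zero_iff.2 hu)).trans
    (hasSum_descFactorial_mul_geometric j hwu).tsum_eq.symm

theorem H2.inner_eq_iteratedDeriv_toFun {K : H2} {w : ℂ} (hw : w ∈ 𝔻) {j : ℕ}
    (hK : ∀ u ∈ 𝔻, H2.toFun K u = j.factorial * u ^ j / (1 - conj w * u) ^ (j + 1)) (f : H2) :
    inner ℂ K f = iteratedDeriv j (H2.toFun f) w := by
  unfold H2.toFun
  rw [(H2.diskSummable f).iteratedDeriv_tsum j (mem_ball_zero_iff.1 hw), lp.inner_eq_tsum]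
  refine tsum_congr fun n => ?_
  rw [H2.coeFn_eq_of_toFun_eq hw hK, RCLike.inner_apply']
  simp only [map_mul, map_pow, map_natCast, conj_conj]
  ring

theorem IsEof.iteratedDeriv_toFun {ψ₀ ψ₁ : ℂ → ℂ} (hψ₀ : DifferentiableOn ℂ ψ₀ 𝔻)
    (hψ₁ : DifferentiableOn ℂ ψ₁ 𝔻) {f g : H2} (h : IsEof ψ₀ ψ₁ f g) {w : ℂ} (hw : w ∈ 𝔻)
    (m : ℕ) :
    iteratedDeriv m (H2.toFun g) w =
      ∑ i ∈ Finset.range (m + 1), (m.choose i : ℂ) *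
        (iteratedDeriv (m - i) ψ₀ w * iteratedDeriv i (H2.toFun f) w +
          iteratedDeriv (m - i) ψ₁ w * iteratedDeriv (i + 1) (H2.toFun f) w) := by
  have hnhds : 𝔻 ∈ nhds w := isOpen_ball.mem_nhds hw
  rw [← iteratedDeriv_mul_add_mul_deriv (hψ₀.analyticAt hnhds) (hψ₁.analyticAt hnhds)
    (H2.analyticAt_toFun f hw)]
  exact Filter.EventuallyEq.iteratedDeriv_eq m (Filter.eventually_of_mem hnhds h)

/-- for a densely defined first-order differential operator `ℰ` with symbols
`ψ₀, ψ₁`, for `w ∈ 𝔻` and `m ∈ ℕ`, `K_w^{[m]} ∈ dom(ℰ*)` and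
`ℰ*K_w^{[m]} = conj(ψ₀^{(m)}(w))·K_w
  + Σ_{j=1}^{m} [C(m,j)·conj(ψ₀^{(m−j)}(w)) + C(m,j−1)·conj(ψ₁^{(m−j+1)}(w))]·K_w^{[j]}
  + conj(ψ₁(w))·K_w^{[m+1]}`. -/
theorem stmt5 (ψ₀ ψ₁ : ℂ → ℂ)
    (hψ₀ : DifferentiableOn ℂ ψ₀ 𝔻) (hψ₁ : DifferentiableOn ℂ ψ₁ 𝔻)
    (ℰ : H2 →ₗ.[ℂ] H2)
    (hsub : ∀ f : ℰ.domain, IsEof ψ₀ ψ₁ f.1 (ℰ f))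
    (hdense : Dense (ℰ.domain : Set H2))
    (w : ℂ) (hw : w ∈ 𝔻) (m : ℕ) (K : ℕ → H2)
    (hK : ∀ j ≤ m + 1, ∀ u ∈ 𝔻,
      H2.toFun (K j) u = (j.factorial : ℂ) * u ^ j / (1 - conj w * u) ^ (j + 1)) :
    ∃ h : K m ∈ (LinearPMap.adjoint ℰ).domain,
      (LinearPMap.adjoint ℰ) ⟨K m, h⟩ =
        conj (iteratedDeriv m ψ₀ w) • K 0 +
        (∑ j ∈ Finset.Icc 1 m,
          ((m.choose j : ℂ) * conj (iteratedDeriv (m - j) ψ₀ w) +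
            (m.choose (j - 1) : ℂ) * conj (iteratedDeriv (m - j + 1) ψ₁ w)) • K j) +
        conj (ψ₁ w) • K (m + 1) := by
  have hrepr : ∀ j ≤ m + 1, ∀ f : H2, inner ℂ (K j) f = iteratedDeriv j (H2.toFun f) w :=
    fun j hj => H2.inner_eq_iteratedDeriv_toFun hw (hK j hj)
  refine LinearPMap.exists_adjoint_apply_eq hdense fun x => ?_
  rw [hrepr m m.le_succ, (hsub x).iteratedDeriv_toFun hψ₀ hψ₁ hw,
    sum_range_choose_mul_add_shift (iteratedDeriv · ψ₀ w) (iteratedDeriv · ψ₁ w)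
      (iteratedDeriv · (H2.toFun x) w),
    inner_add_left, inner_add_left, sum_inner, inner_smul_left, inner_smul_left,
    hrepr 0 (Nat.zero_le _), hrepr (m + 1) le_rfl, iteratedDeriv_zero, conj_conj, conj_conj]
  congr 2
  refine Finset.sum_congr rfl fun j hj => ?_
  rw [inner_smul_left, hrepr j (by have := (Finset.mem_Icc.1 hj).2; omega)]
  simp only [map_add, map_mul, map_natCast, conj_conj]
end
end

section
/- Suppose ψ₀, ψ₁ are holomorphic on 𝔻, β ∈ ℂ with |β| = 1, and for all z, u ∈ 𝔻: ψ₀(u) + ψ₁(u)·conj(z)/(1 − u·conj(z)) = ψ₀(β·conj z) + ψ₁(β·conj z)·u·conj(β)/(1 − u·conj(z)). Then there exist constants a, b, c ∈ ℂ such that ψ₀(u) = a + bu and ψ₁(u) = bβ + cu + bu² for all u ∈ 𝔻. -/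
open Complex ComplexConjugate Metric Filter

noncomputable section

/-!
Clearing the denominator and writing `w = conj z`, the identity becomes polynomial in `u` and `w`.
At `w = 0` it says `ψ₀ u = a + b u` with `b = ψ₁ 0 · conj β`. Substituting this back, the
remainder `G u = ψ₁ u - ψ₁ 0 - b u²` satisfies `w · G u = u · conj β · G (β w)`; on the diagonal
`u = w` this gives `G w = conj β · G (β w)`, hence `w · G u = u · G w`, so `G` is linear.
-/

lemma conj_mul_self_of_norm_eq_one {β : ℂ} (hβ : ‖β‖ = 1) : conj β * β = 1 := by
  rw [conj_mul', hβ]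
  norm_num

lemma zero_mem_𝔻 : (0 : ℂ) ∈ 𝔻 := mem_ball_self one_pos

lemma conj_mem_𝔻 {z : ℂ} (hz : z ∈ 𝔻) : conj z ∈ 𝔻 := by
  simpa [𝔻, mem_ball_zero_iff] using hz

lemma mul_mem_𝔻_of_norm_eq_one {β w : ℂ} (hβ : ‖β‖ = 1) (hw : w ∈ 𝔻) : β * w ∈ 𝔻 := by
  simpa [𝔻, mem_ball_zero_iff, hβ] using hw

lemma one_sub_mul_ne_zero_of_mem_𝔻 {u w : ℂ} (hu : u ∈ 𝔻) (hw : w ∈ 𝔻) : 1 - u * w ≠ 0 := by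
  rw [𝔻, mem_ball_zero_iff] at hu hw
  have : ‖u * w‖ < 1 := by
    rw [norm_mul]
    nlinarith [norm_nonneg u, norm_nonneg w]
  intro h
  rw [← sub_eq_zero.mp h, norm_one] at this
  exact this.false

lemma eq_div_mul_of_mul_eq_mul {K : Type*} [Field K] {S : Set K} {G : K → K} {c : K}
    (hc : c ∈ S) (hc₀ : c ≠ 0) (h : ∀ u ∈ S, ∀ w ∈ S, w * G u = u * G w) :
    ∀ u ∈ S, G u = G c / c * u := by
  intro u hu
  field_simp
  linear_combination h u hu c hc

def quadraticRemainder (β : ℂ) (ψ₁ : ℂ → ℂ) (v : ℂ) : ℂ :=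
  ψ₁ v - ψ₁ 0 - ψ₁ 0 * conj β * v ^ 2

@[simp]
lemma quadraticRemainder_zero (β : ℂ) (ψ₁ : ℂ → ℂ) : quadraticRemainder β ψ₁ 0 = 0 := by
  simp [quadraticRemainder]

section

variable {β : ℂ} {ψ₀ ψ₁ : ℂ → ℂ}

lemma cleared_identity
    (hid : ∀ z ∈ 𝔻, ∀ u ∈ 𝔻,
      ψ₀ u + ψ₁ u * conj z / (1 - u * conj z) =
        ψ₀ (β * conj z) + ψ₁ (β * conj z) * u * conj β / (1 - u * conj z)) :
    ∀ u ∈ 𝔻, ∀ w ∈ 𝔻,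
      ψ₀ u * (1 - u * w) + ψ₁ u * w = ψ₀ (β * w) * (1 - u * w) + ψ₁ (β * w) * u * conj β := by
  intro u hu w hw
  have h := hid (conj w) (conj_mem_𝔻 hw) u hu
  rw [conj_conj] at h
  have hd : (1 - u * w) * (1 - u * w)⁻¹ = 1 := mul_inv_cancel₀ (one_sub_mul_ne_zero_of_mem_𝔻 hu hw)
  simp only [div_eq_mul_inv] at h
  linear_combination (1 - u * w) * h - (ψ₁ u * w - ψ₁ (β * w) * u * conj β) * hd

variable (H : ∀ u ∈ 𝔻, ∀ w ∈ 𝔻,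
  ψ₀ u * (1 - u * w) + ψ₁ u * w = ψ₀ (β * w) * (1 - u * w) + ψ₁ (β * w) * u * conj β)
include H

lemma eq_affine_of_cleared_identity : ∀ u ∈ 𝔻, ψ₀ u = ψ₀ 0 + ψ₁ 0 * conj β * u := by
  intro u hu
  have h := H u hu 0 zero_mem_𝔻
  simp only [mul_zero, sub_zero, mul_one, add_zero] at h
  linear_combination h

variable (hβ : ‖β‖ = 1)
include hβ

lemma mul_quadraticRemainder_eq_twisted {u w : ℂ} (hu : u ∈ 𝔻) (hw : w ∈ 𝔻) :
    w * quadraticRemainder β ψ₁ u = u * conj β * quadraticRemainder β ψ₁ (β * w) := by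
  unfold quadraticRemainder
  have h := H u hu w hw
  rw [eq_affine_of_cleared_identity H u hu,
    eq_affine_of_cleared_identity H (β * w) (mul_mem_𝔻_of_norm_eq_one hβ hw)] at h
  linear_combination h + ψ₁ 0 * (u * β * w ^ 2 * conj β + w) *
    conj_mul_self_of_norm_eq_one hβ

lemma mul_quadraticRemainder_comm {u w : ℂ} (hu : u ∈ 𝔻) (hw : w ∈ 𝔻) :
    w * quadraticRemainder β ψ₁ u = u * quadraticRemainder β ψ₁ w := by
  set G := quadraticRemainder β ψ₁
  have diagonal : G w = conj β * G (β * w) := by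
    rcases eq_or_ne w 0 with rfl | hw₀
    · simp [G]
    · exact mul_left_cancel₀ hw₀ <| by
        linear_combination mul_quadraticRemainder_eq_twisted H hβ hw hw
  rw [diagonal]
  linear_combination mul_quadraticRemainder_eq_twisted H hβ hu hw

end

theorem stmt8_general (β : ℂ) (hβ : ‖β‖ = 1) (ψ₀ ψ₁ : ℂ → ℂ)
    (hid : ∀ z ∈ 𝔻, ∀ u ∈ 𝔻,
      ψ₀ u + ψ₁ u * conj z / (1 - u * conj z) =
        ψ₀ (β * conj z) + ψ₁ (β * conj z) * u * conj β / (1 - u * conj z)) :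
    ∃ a b c : ℂ, ∀ u ∈ 𝔻, ψ₀ u = a + b * u ∧ ψ₁ u = b * β + c * u + b * u ^ 2 := by
  have H := cleared_identity hid
  have half_mem : (1 / 2 : ℂ) ∈ 𝔻 := by
    rw [𝔻, mem_ball_zero_iff]
    norm_num
  have remainder_linear := eq_div_mul_of_mul_eq_mul half_mem (by norm_num)
    fun u hu w hw => mul_quadraticRemainder_comm H hβ hu hw
  refine ⟨ψ₀ 0, ψ₁ 0 * conj β, quadraticRemainder β ψ₁ (1 / 2) / (1 / 2), fun u hu =>
    ⟨eq_affine_of_cleared_identity H u hu, ?_⟩⟩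
  unfold quadraticRemainder at remainder_linear ⊢
  linear_combination remainder_linear u hu - ψ₁ 0 * conj_mul_self_of_norm_eq_one hβ

/-- if holomorphic `ψ₀, ψ₁` on `𝔻` satisfy the two-variable identity
`ψ₀(u) + ψ₁(u)·conj z/(1 − u·conj z) = ψ₀(β·conj z) + ψ₁(β·conj z)·u·conj β/(1 − u·conj z)`
for all `z, u ∈ 𝔻`, then `ψ₀(u) = a + bu` and `ψ₁(u) = bβ + cu + bu²` for constants `a,b,c`. -/
theorem stmt8 (β : ℂ) (hβ : ‖β‖ = 1) (ψ₀ ψ₁ : ℂ → ℂ)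
    (hψ₀ : DifferentiableOn ℂ ψ₀ 𝔻) (hψ₁ : DifferentiableOn ℂ ψ₁ 𝔻)
    (hid : ∀ z ∈ 𝔻, ∀ u ∈ 𝔻,
      ψ₀ u + ψ₁ u * conj z / (1 - u * conj z) =
        ψ₀ (β * conj z) + ψ₁ (β * conj z) * u * conj β / (1 - u * conj z)) :
    ∃ a b c : ℂ, ∀ u ∈ 𝔻, ψ₀ u = a + b * u ∧ ψ₁ u = b * β + c * u + b * u ^ 2 :=
  stmt8_general β hβ ψ₀ ψ₁ hid
end
end

section
/- Suppose ψ₀, ψ₁ are holomorphic on 𝔻 and satisfy, for all z, u ∈ 𝔻: ψ₀(u) + ψ₁(u)·conj(z)/(1 − conj(z)u) = conj(ψ₀(z)) + conj(ψ₁(z))·u/(1 − conj(z)u). Then there exist b ∈ ℂ and a, c ∈ ℝ such that ψ₀(u) = a + bu and ψ₁(u) = conj(b) + cu + bu² for all u ∈ 𝔻. -/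
open Complex ComplexConjugate Metric Filter

noncomputable section

/-!
Putting `z = 0` in the identity shows that `ψ₀ u = conj (ψ₀ 0) + conj (ψ₁ 0) u`, and `u = 0` then
makes `ψ₀ 0` real. Putting `z = r` for a real `r ≠ 0` and clearing the denominator `1 - r u` expresses
`r ψ₁ u` through `ψ₀` and the single value `conj (ψ₁ r)`, so `ψ₁` is a quadratic polynomial. Evaluating
that formula back at `u = r` shows that its middle coefficient equals its own conjugate.
-/

theorem ofReal_mem_𝔻 {r : ℝ} (hr : |r| < 1) : (r : ℂ) ∈ 𝔻 := by
  simpa [𝔻] using hr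

theorem one_sub_conj_mul_ne_zero {z u : ℂ} (hz : z ∈ 𝔻) (hu : u ∈ 𝔻) : 1 - conj z * u ≠ 0 := by
  refine sub_ne_zero.mpr fun h₁ => ?_
  have : ‖conj z * u‖ < 1 := by
    rw [norm_mul, RCLike.norm_conj]
    exact mul_lt_one_of_nonneg_of_lt_one_left (norm_nonneg z) (mem_ball_zero_iff.mp hz)
      (mem_ball_zero_iff.mp hu).le
  simp [← h₁] at this

/-- `K z u := ψ₀ u + ψ₁ u * conj z / (1 - conj z * u)` is a Hermitian kernel: `K z u = conj (K u z)`. -/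
def SymmetricOnKernels (ψ₀ ψ₁ : ℂ → ℂ) : Prop :=
  ∀ z ∈ 𝔻, ∀ u ∈ 𝔻,
    ψ₀ u + ψ₁ u * conj z / (1 - conj z * u) = conj (ψ₀ z) + conj (ψ₁ z) * u / (1 - conj z * u)

namespace SymmetricOnKernels

/-- The middle coefficient of `ψ₁`, read off from the identity at `z = r`. -/
def midCoeff (ψ₁ : ℂ → ℂ) (r : ℝ) : ℂ := (conj (ψ₁ r) - conj (ψ₁ 0)) / r - ψ₁ 0 * r

variable {ψ₀ ψ₁ : ℂ → ℂ} (h : SymmetricOnKernels ψ₀ ψ₁)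
include h

theorem eq_conj_add_mul {u : ℂ} (hu : u ∈ 𝔻) : ψ₀ u = conj (ψ₀ 0) + conj (ψ₁ 0) * u := by
  simpa using h 0 (mem_ball_self one_pos) u hu

theorem conj_apply_zero : conj (ψ₀ 0) = ψ₀ 0 := by
  simpa using (h.eq_conj_add_mul (mem_ball_self one_pos)).symm

theorem eq_quadratic {r : ℝ} (hr₀ : r ≠ 0) (hr : |r| < 1) {u : ℂ} (hu : u ∈ 𝔻) :
    ψ₁ u = ψ₁ 0 + midCoeff ψ₁ r * u + conj (ψ₁ 0) * u ^ 2 := by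
  have hr' : (r : ℂ) ∈ 𝔻 := ofReal_mem_𝔻 hr
  have hr₀' : (r : ℂ) ≠ 0 := ofReal_ne_zero.mpr hr₀
  have hden := one_sub_conj_mul_ne_zero hr' hu
  have hid := h r hr' u hu
  rw [conj_ofReal] at hid hden
  field_simp at hid
  have hψ₀u := h.eq_conj_add_mul hu
  have hψ₀r : conj (ψ₀ r) = ψ₀ 0 + ψ₁ 0 * r := by
    rw [h.eq_conj_add_mul hr', map_add, map_mul, conj_conj, conj_conj, conj_ofReal]
  rw [midCoeff]
  field_simp
  linear_combination hid - (1 - r * u) * hψ₀u + (1 - r * u) * hψ₀r - (1 - r * u) * h.conj_apply_zero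

theorem conj_midCoeff {r : ℝ} (hr₀ : r ≠ 0) (hr : |r| < 1) :
    conj (midCoeff ψ₁ r) = midCoeff ψ₁ r := by
  have hr₀' : (r : ℂ) ≠ 0 := ofReal_ne_zero.mpr hr₀
  calc conj (midCoeff ψ₁ r) = (ψ₁ r - ψ₁ 0) / r - conj (ψ₁ 0) * r := by simp [midCoeff]
    _ = midCoeff ψ₁ r := by
      rw [h.eq_quadratic hr₀ hr (ofReal_mem_𝔻 hr)]
      field_simp
      ring

end SymmetricOnKernels

theorem stmt9_general (ψ₀ ψ₁ : ℂ → ℂ)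
    (hid : ∀ z ∈ 𝔻, ∀ u ∈ 𝔻,
      ψ₀ u + ψ₁ u * conj z / (1 - conj z * u) =
        conj (ψ₀ z) + conj (ψ₁ z) * u / (1 - conj z * u)) :
    ∃ (b : ℂ) (a c : ℝ), ∀ u ∈ 𝔻,
      ψ₀ u = (a : ℂ) + b * u ∧ ψ₁ u = conj b + (c : ℂ) * u + b * u ^ 2 := by
  have h : SymmetricOnKernels ψ₀ ψ₁ := hid
  have hr₀ : (1 / 2 : ℝ) ≠ 0 := by norm_num
  have hr : |(1 / 2 : ℝ)| < 1 := by norm_num [abs_of_pos]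
  have ha := conj_eq_iff_re.mp h.conj_apply_zero
  have hc := conj_eq_iff_re.mp (h.conj_midCoeff hr₀ hr)
  refine ⟨conj (ψ₁ 0), (ψ₀ 0).re, (SymmetricOnKernels.midCoeff ψ₁ (1 / 2)).re,
    fun u hu => ⟨?_, ?_⟩⟩
  · rw [ha, ← h.conj_apply_zero]
    exact h.eq_conj_add_mul hu
  · rw [conj_conj, hc]
    exact h.eq_quadratic hr₀ hr hu

/-- if holomorphic `ψ₀, ψ₁` on `𝔻` satisfy
`ψ₀(u) + ψ₁(u)·conj z/(1 − conj(z)u) = conj(ψ₀(z)) + conj(ψ₁(z))·u/(1 − conj(z)u)`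
for all `z, u ∈ 𝔻`, then `ψ₀(u) = a + bu`, `ψ₁(u) = conj b + cu + bu²` with `b ∈ ℂ`, `a, c ∈ ℝ`. -/
theorem stmt9 (ψ₀ ψ₁ : ℂ → ℂ)
    (hψ₀ : DifferentiableOn ℂ ψ₀ 𝔻) (hψ₁ : DifferentiableOn ℂ ψ₁ 𝔻)
    (hid : ∀ z ∈ 𝔻, ∀ u ∈ 𝔻,
      ψ₀ u + ψ₁ u * conj z / (1 - conj z * u) =
        conj (ψ₀ z) + conj (ψ₁ z) * u / (1 - conj z * u)) :
    ∃ (b : ℂ) (a c : ℝ), ∀ u ∈ 𝔻,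
      ψ₀ u = (a : ℂ) + b * u ∧ ψ₁ u = conj b + (c : ℂ) * u + b * u ^ 2 :=
  stmt9_general ψ₀ ψ₁ hid
end
end

section
/- Let ℰ be any first-order differential operator on H² (not necessarily maximal) with holomorphic symbols ψ₀, ψ₁, meaning ℰf = ψ₀f + ψ₁f' for f ∈ dom(ℰ). If ψ₁(u) = 0 for some u ∈ 𝔻, then every eigenvalue λ of ℰ is of the form λ = ψ₀(u) + ℓ·ψ₁'(u) for some ℓ ∈ ℕ. -/
open Complex ComplexConjugate Metric Filter
open Topology

/-!
Near `u`, away from the zeros of `g`, the eigenvalue equation reads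
`μ = ψ₀ z + (ψ₁ z / (z - u)) · ((z - u) g'(z) / g(z))`. The first factor tends to `ψ₁'(u)`
because `ψ₁ u = 0`, and the logarithmic residue `(z - u) g'/g` tends to the order `ℓ` of the
zero of `g` at `u`, which is finite because `g ≠ 0` is analytic on the connected disk.
Letting `z → u` gives `μ = ψ₀ u + ℓ ψ₁'(u)`.
-/

noncomputable section

section LogarithmicResidue

variable {𝕜 : Type*} [NontriviallyNormedField 𝕜] [CompleteSpace 𝕜]

theorem AnalyticAt.tendsto_mul_logDeriv_of_analyticOrderAt_eq {f : 𝕜 → 𝕜} {x : 𝕜} {n : ℕ}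
    (hf : AnalyticAt 𝕜 f x) (hn : analyticOrderAt f x = n) :
    Tendsto (fun w => (w - x) * logDeriv f w) (𝓝[≠] x) (𝓝 n) := by
  obtain ⟨h, hh, hx, hfh⟩ := hf.analyticOrderAt_eq_natCast.mp hn
  have hlim : Tendsto (fun w => n + (w - x) * logDeriv h w) (𝓝[≠] x) (𝓝 n) := by
    have hcont : ContinuousAt (logDeriv h) x := hh.deriv.continuousAt.div hh.continuousAt hx
    have : ContinuousAt (fun w => n + (w - x) * logDeriv h w) x := by fun_prop
    simpa using this.tendsto.mono_left nhdsWithin_le_nhds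
  refine hlim.congr' ?_
  have hne : ∀ᶠ w in 𝓝[≠] x, h w ≠ 0 :=
    nhdsWithin_le_nhds (hh.continuousAt.eventually_ne hx)
  have hdiff : ∀ᶠ w in 𝓝[≠] x, DifferentiableAt 𝕜 h w :=
    nhdsWithin_le_nhds (hh.eventually_analyticAt.mono fun _ hw => hw.differentiableAt)
  filter_upwards [nhdsWithin_le_nhds hfh.eventually_nhds, hne, hdiff, self_mem_nhdsWithin]
    with w hfw hw hdw hwx
  replace hwx : w - x ≠ 0 := sub_ne_zero.mpr hwx
  have hfw : f =ᶠ[𝓝 w] fun w => (w - x) ^ n * h w := hfw.mono fun _ hy => by rw [hy, smul_eq_mul]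
  rw [(logDeriv_congr_nhds hfw).self_of_nhds,
    logDeriv_mul (f := fun w => (w - x) ^ n) w (pow_ne_zero n hwx) hw (by fun_prop) hdw,
    logDeriv_fun_pow (by fun_prop), logDeriv_apply (· - x), deriv_sub_const, deriv_id'']
  field_simp

theorem eigenvalue_eq_add_analyticOrderAt_mul_deriv {ψ₀ ψ₁ F : 𝕜 → 𝕜} {u μ : 𝕜} {n : ℕ}
    (hF : AnalyticAt 𝕜 F u) (hn : analyticOrderAt F u = n)
    (hψ₀ : ContinuousAt ψ₀ u) (hψ₁ : DifferentiableAt 𝕜 ψ₁ u) (hu : ψ₁ u = 0)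
    (heig : ∀ᶠ z in 𝓝 u, ψ₀ z * F z + ψ₁ z * deriv F z = μ * F z) :
    μ = ψ₀ u + n * deriv ψ₁ u := by
  have hFne : ∀ᶠ z in 𝓝[≠] u, F z ≠ 0 :=
    hF.eventually_eq_zero_or_eventually_ne_zero.resolve_left fun h =>
      ENat.natCast_ne_top n (hn ▸ analyticOrderAt_eq_top.mpr h)
  have hlim : Tendsto (fun z => ψ₀ z + (z - u) * logDeriv F z * slope ψ₁ u z) (𝓝[≠] u)
      (𝓝 (ψ₀ u + n * deriv ψ₁ u)) :=
    (hψ₀.tendsto.mono_left nhdsWithin_le_nhds).add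
      ((hF.tendsto_mul_logDeriv_of_analyticOrderAt_eq hn).mul
        (hasDerivAt_iff_tendsto_slope.mp hψ₁.hasDerivAt))
  refine tendsto_nhds_unique (tendsto_const_nhds.congr' ?_) hlim
  filter_upwards [nhdsWithin_le_nhds heig, hFne, self_mem_nhdsWithin] with z hz hFz hzu
  replace hzu : z - u ≠ 0 := sub_ne_zero.mpr hzu
  rw [slope_def_field, hu, logDeriv_apply]
  field_simp
  linear_combination -hz

end LogarithmicResidue

namespace H2

theorem hasFPowerSeriesOnBall_toFun_s19 (g : H2) :
    HasFPowerSeriesOnBall (H2.toFun g) (FormalMultilinearSeries.ofScalars ℂ fun n => g n) 0 1 := by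
  set p := FormalMultilinearSeries.ofScalars ℂ fun n => g n
  have hrad : 1 ≤ p.radius :=
    p.le_radius_of_bound ‖g‖ fun n => by
      simpa [p, FormalMultilinearSeries.ofScalars_norm] using lp.norm_apply_le_norm two_ne_zero g n
  have hsum : H2.toFun g = p.sum := by
    ext z
    rw [show p.sum z = FormalMultilinearSeries.ofScalarsSum _ z from rfl,
      FormalMultilinearSeries.ofScalars_sum_eq]
    simp only [H2.toFun, smul_eq_mul]
  rw [hsum]
  exact (p.hasFPowerSeriesOnBall (one_pos.trans_le hrad)).mono one_pos hrad

theorem analyticOnNhd_toFun (g : H2) : AnalyticOnNhd ℂ (H2.toFun g) 𝔻 := fun _ hz =>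
  (hasFPowerSeriesOnBall_toFun_s19 g).analyticAt_of_mem
    (by simpa [𝔻, enorm_eq_nnnorm, ← NNReal.coe_lt_one] using hz)

theorem analyticOrderAt_toFun_ne_top {g : H2} (hg : g ≠ 0) {u : ℂ} (hu : u ∈ 𝔻) :
    analyticOrderAt (H2.toFun g) u ≠ ⊤ := by
  intro htop
  have hzero : Set.EqOn (H2.toFun g) 0 𝔻 :=
    (analyticOnNhd_toFun g).eqOn_zero_of_preconnected_of_eventuallyEq_zero
      (convex_ball (0 : ℂ) 1).isPreconnected hu (analyticOrderAt_eq_top.mp htop)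
  have hp : FormalMultilinearSeries.ofScalars ℂ (fun n => g n) = 0 :=
    (hasFPowerSeriesOnBall_toFun_s19 g).hasFPowerSeriesAt.eq_zero_of_eventually
      (eventuallyEq_of_mem (isOpen_ball.mem_nhds (mem_ball_self one_pos)) hzero)
  exact hg (lp.ext ((FormalMultilinearSeries.ofScalars_series_eq_zero ℂ).mp hp))

end H2

/-- if the top symbol `ψ₁` of a first-order differential operator vanishes at
some `u ∈ 𝔻`, then every eigenvalue `μ` (with eigenfunction `g ∈ H²`, `g ≠ 0`, satisfying
`ψ₀ g + ψ₁ g′ = μ g` on `𝔻`) is of the form `μ = ψ₀(u) + ℓ·ψ₁′(u)` for some `ℓ ∈ ℕ`. -/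
theorem stmt19 (ψ₀ ψ₁ : ℂ → ℂ)
    (hψ₀ : DifferentiableOn ℂ ψ₀ 𝔻) (hψ₁ : DifferentiableOn ℂ ψ₁ 𝔻)
    (u : ℂ) (hu : u ∈ 𝔻) (hu0 : ψ₁ u = 0)
    (μ : ℂ) (g : H2) (hg0 : g ≠ 0)
    (heig : ∀ z ∈ 𝔻, ψ₀ z * H2.toFun g z + ψ₁ z * deriv (H2.toFun g) z = μ * H2.toFun g z) :
    ∃ ℓ : ℕ, μ = ψ₀ u + (ℓ : ℂ) * deriv ψ₁ u := by
  have hnhds : 𝔻 ∈ 𝓝 u := isOpen_ball.mem_nhds hu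
  obtain ⟨n, hn⟩ := ENat.ne_top_iff_exists.mp (H2.analyticOrderAt_toFun_ne_top hg0 hu)
  exact ⟨n, eigenvalue_eq_add_analyticOrderAt_mul_deriv (H2.analyticOnNhd_toFun g u hu) hn.symm
    (hψ₀.continuousOn.continuousAt hnhds) (hψ₁.differentiableAt hnhds) hu0
    (eventually_of_mem hnhds heig)⟩
end
end
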